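/- The exponential generating function ∑_{n≥0} a_{n+2} x^n/n! where a_n = 2∑_{k=1}^{n-1} k·S(n-1,k) (with a_2 = 2) equals 2·e^{e^x + 2x - 1}. -/

import Mathlib

/-!
Dobiński's formula `∑ₘ mⁿ / m! = e · ∑ₖ S(n, k)` together with the recurrence
`∑ₖ S(n + 2, k) - ∑ₖ S(n + 1, k) = ∑ₖ k S(n + 1, k)` gives
`∑ₘ (m + 2)ⁿ / m! = e · ∑ₖ k S(n + 1, k)`, since `(m + 2)ⁿ / m! = (m'ⁿ⁺² - m'ⁿ⁺¹) / m'!` for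
`m' = m + 2`. Hence the series equals `2 / e` times the absolutely convergent double series
`∑ₘ,ₙ ((m + 2) x)ⁿ / (m! n!)` summed over `m` first; summing over `n` first instead gives
`∑ₘ e^{(m + 2) x} / m! = e^{eˣ + 2x}`.
-/

/-- Stirling numbers of the second kind. -/
def stirling2 : ℕ → ℕ → ℕ
  | 0, 0 => 1
  | 0, _ + 1 => 0
  | _ + 1, 0 => 0
  | n + 1, k + 1 => (k + 1) * stirling2 n (k + 1) + stirling2 n k

open Finset Nat Real

theorem stirling2_eq_stirlingSecond : stirling2 = Nat.stirlingSecond := by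
  funext n k
  induction n generalizing k with
  | zero => cases k <;> rfl
  | succ n ih => cases k <;> simp [stirling2, stirlingSecond_succ_succ, ih]

theorem sum_Icc_one_eq_sum_range {M : Type*} [AddCommMonoid M] {f : ℕ → M} (hf : f 0 = 0)
    (n : ℕ) : ∑ k ∈ Icc 1 n, f k = ∑ k ∈ range (n + 1), f k := by
  rw [range_eq_Ico, sum_eq_sum_Ico_succ_bot n.succ_pos, hf, zero_add]
  rfl

theorem HasSum.of_prod_fiberwise_swap {α β γ : Type*} [AddCommMonoid α] [TopologicalSpace α]
    [ContinuousAdd α] [T3Space α] {f : β × γ → α} {g : β → α} {h : γ → α} {a : α}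
    (hf : Summable f) (hg : ∀ b, HasSum (fun c => f (b, c)) (g b)) (hga : HasSum g a)
    (hh : ∀ c, HasSum (fun b => f (b, c)) (h c)) : HasSum h a := by
  have hfa : HasSum f a := by
    simpa only [(hf.hasSum.prod_fiberwise hg).unique hga] using hf.hasSum
  exact ((Equiv.prodComm γ β).hasSum_iff.mpr hfa).prod_fiberwise hh

theorem Real.hasSum_pow_div_factorial (y : ℝ) : HasSum (fun n => y ^ n / n !) (exp y) := by
  rw [exp_eq_exp_ℝ]
  exact NormedSpace.expSeries_div_hasSum_exp y

namespace Nat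

theorem sum_stirlingSecond_succ_mul {R : Type*} [CommSemiring R] (n : ℕ) (g : ℕ → R) :
    ∑ k ∈ range (n + 2), (stirlingSecond (n + 1) k : R) * g k =
      ∑ k ∈ range (n + 1), (stirlingSecond n k : R) * (g (k + 1) + k * g k) := by
  have hshift : ∑ k ∈ range (n + 1), ((k + 1) * stirlingSecond n (k + 1) : R) * g (k + 1) =
      ∑ k ∈ range (n + 1), (k * stirlingSecond n k : R) * g k := by
    rw [sum_range_succ, sum_range_succ' _ n, stirlingSecond_eq_zero_of_lt n.lt_succ_self]
    simp
  calc ∑ k ∈ range (n + 2), (stirlingSecond (n + 1) k : R) * g k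
      = ∑ k ∈ range (n + 1), (((k + 1) * stirlingSecond n (k + 1) : R) * g (k + 1) +
          stirlingSecond n k * g (k + 1)) := by
        rw [sum_range_succ', stirlingSecond_succ_zero, cast_zero, zero_mul, add_zero]
        exact sum_congr rfl fun k _ => by rw [stirlingSecond_succ_succ]; push_cast; ring
    _ = ∑ k ∈ range (n + 1), (stirlingSecond n k : R) * (g (k + 1) + k * g k) := by
        rw [sum_add_distrib, hshift, ← sum_add_distrib]
        exact sum_congr rfl fun k _ => by ring

theorem descFactorial_succ_add_mul_descFactorial (m k : ℕ) :
    m.descFactorial (k + 1) + k * m.descFactorial k = m * m.descFactorial k := by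
  rcases le_or_gt k m with h | h
  · rw [descFactorial_succ, ← add_mul, Nat.sub_add_cancel h]
  · simp [descFactorial_eq_zero_iff_lt.2 h]

theorem pow_eq_sum_stirlingSecond_mul_descFactorial (m n : ℕ) :
    m ^ n = ∑ k ∈ range (n + 1), stirlingSecond n k * m.descFactorial k := by
  induction n with
  | zero => simp
  | succ n ih =>
    have := sum_stirlingSecond_succ_mul n (R := ℕ) m.descFactorial
    simp only [Nat.cast_id, descFactorial_succ_add_mul_descFactorial] at this
    rw [this, pow_succ', ih, mul_sum]
    exact sum_congr rfl fun k _ => by ring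

end Nat

theorem hasSum_descFactorial_div_factorial (k : ℕ) :
    HasSum (fun m : ℕ => (m.descFactorial k : ℝ) / m !) (exp 1) := by
  have hterm : ∀ j : ℕ, ((j + k).descFactorial k : ℝ) / (j + k) ! = 1 ^ j / j ! := fun j => by
    rw [one_pow, div_eq_div_iff (by positivity) (by positivity), one_mul,
      ← factorial_mul_descFactorial (k.le_add_left j), Nat.add_sub_cancel]
    push_cast; ring
  have hshifted : HasSum (fun j : ℕ => ((j + k).descFactorial k : ℝ) / (j + k) !) (exp 1) := by
    simpa only [hterm] using Real.hasSum_pow_div_factorial 1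
  have hinitial : ∑ m ∈ range k, (m.descFactorial k : ℝ) / m ! = 0 :=
    sum_eq_zero fun m hm => by rw [descFactorial_eq_zero_iff_lt.2 (mem_range.1 hm)]; simp
  have := (hasSum_nat_add_iff (f := fun m : ℕ => (m.descFactorial k : ℝ) / m !) k).1 hshifted
  rwa [hinitial, add_zero] at this

theorem hasSum_natCast_pow_div_factorial (n : ℕ) :
    HasSum (fun m : ℕ => (m : ℝ) ^ n / m !)
      (exp 1 * ∑ k ∈ range (n + 1), (stirlingSecond n k : ℝ)) := by
  have := hasSum_sum (s := range (n + 1)) fun k _ =>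
    (hasSum_descFactorial_div_factorial k).mul_left (stirlingSecond n k : ℝ)
  rw [← sum_mul, mul_comm] at this
  have hterm : ∀ m : ℕ, (m : ℝ) ^ n / m ! =
      ∑ k ∈ range (n + 1), (stirlingSecond n k : ℝ) * ((m.descFactorial k : ℝ) / m !) := fun m => by
    rw [← cast_pow, pow_eq_sum_stirlingSecond_mul_descFactorial, cast_sum, sum_div]
    exact sum_congr rfl fun k _ => by push_cast; ring
  simpa only [hterm] using this

theorem hasSum_add_two_pow_div_factorial (n : ℕ) :
    HasSum (fun m : ℕ => ((m : ℝ) + 2) ^ n / m !)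
      (exp 1 * ∑ k ∈ range (n + 2), (k * stirlingSecond (n + 1) k : ℝ)) := by
  have hbell : ∑ k ∈ range (n + 3), (stirlingSecond (n + 2) k : ℝ) -
      ∑ k ∈ range (n + 2), (stirlingSecond (n + 1) k : ℝ) =
      ∑ k ∈ range (n + 2), (k * stirlingSecond (n + 1) k : ℝ) := by
    have := sum_stirlingSecond_succ_mul (n + 1) fun _ => (1 : ℝ)
    simp only [mul_one, mul_add, sum_add_distrib] at this
    rw [this]
    simp only [mul_comm, add_sub_cancel_left]
  set F : ℕ → ℝ := fun m => (m : ℝ) ^ (n + 2) / (m ! : ℝ) - (m : ℝ) ^ (n + 1) / m ! with hF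
  have hdiff : HasSum F (exp 1 * ∑ k ∈ range (n + 2), (k * stirlingSecond (n + 1) k : ℝ)) := by
    rw [← hbell, mul_sub]
    exact (hasSum_natCast_pow_div_factorial (n + 2)).sub (hasSum_natCast_pow_div_factorial (n + 1))
  have hterm : ∀ m : ℕ, F (m + 2) = ((m : ℝ) + 2) ^ n / m ! := fun m => by
    simp only [hF, factorial_succ]
    push_cast
    field_simp
    ring
  have hinitial : ∑ m ∈ range 2, F m = 0 := by simp [hF, sum_range_succ]
  simpa only [hterm, hinitial, sub_zero] using (hasSum_nat_add_iff' (f := F) 2).2 hdiff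

theorem hasSum_exp_add_two_mul_div_factorial (y : ℝ) :
    HasSum (fun m : ℕ => exp ((m + 2) * y) / m !) (exp (exp y + 2 * y)) := by
  have hterm : ∀ m : ℕ, exp ((m + 2) * y) / m ! = exp (2 * y) * (exp y ^ m / m !) := fun m => by
    rw [add_mul, exp_add, exp_nat_mul]
    ring
  simpa only [hterm, exp_add, mul_comm (exp (exp y))] using
    (Real.hasSum_pow_div_factorial (exp y)).mul_left (exp (2 * y))

noncomputable def dobinskiTerm (y : ℝ) (p : ℕ × ℕ) : ℝ :=
  (((p.1 : ℝ) + 2) * y) ^ p.2 / (p.1 ! * p.2 !)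

theorem hasSum_dobinskiTerm_row (y : ℝ) (m : ℕ) :
    HasSum (fun n => dobinskiTerm y (m, n)) (exp ((m + 2) * y) / m !) := by
  simpa only [dobinskiTerm, div_div, mul_comm (m ! : ℝ)] using
    (Real.hasSum_pow_div_factorial ((m + 2) * y)).div_const (m ! : ℝ)

theorem hasSum_dobinskiTerm_col (y : ℝ) (n : ℕ) :
    HasSum (fun m => dobinskiTerm y (m, n))
      (exp 1 * (∑ k ∈ range (n + 2), (k * stirlingSecond (n + 1) k : ℝ)) * y ^ n / n !) := by
  have hterm : ∀ m : ℕ, dobinskiTerm y (m, n) = y ^ n / n ! * (((m : ℝ) + 2) ^ n / m !) :=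
    fun m => by rw [dobinskiTerm, mul_pow]; ring
  simpa only [hterm, mul_comm (y ^ n / n !), mul_div_assoc] using
    (hasSum_add_two_pow_div_factorial n).mul_left (y ^ n / n !)

theorem summable_dobinskiTerm (y : ℝ) : Summable (dobinskiTerm y) := by
  refine .of_norm ?_
  have hnorm : (fun p => ‖dobinskiTerm y p‖) = dobinskiTerm |y| := by
    funext p
    simp only [dobinskiTerm, norm_div, norm_pow, norm_mul, Real.norm_eq_abs, Nat.abs_cast,
      abs_of_nonneg (by positivity : (0 : ℝ) ≤ p.1 + 2)]
  rw [hnorm, summable_prod_of_nonneg fun p => by unfold dobinskiTerm; positivity]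
  refine ⟨fun m => (hasSum_dobinskiTerm_row |y| m).summable, ?_⟩
  simpa only [fun m => (hasSum_dobinskiTerm_row |y| m).tsum_eq] using
    (hasSum_exp_add_two_mul_div_factorial |y|).summable

theorem egf_avoid_213 (x : ℝ) :
    HasSum (fun n : ℕ =>
      ((2 * ∑ k ∈ Finset.Icc 1 (n + 1), k * stirling2 (n + 1) k : ℕ) : ℝ)
        * x ^ n / Nat.factorial n)
      (2 * Real.exp (Real.exp x + 2 * x - 1)) := by
  have hcols := HasSum.of_prod_fiberwise_swap (summable_dobinskiTerm x)
    (hasSum_dobinskiTerm_row x) (hasSum_exp_add_two_mul_div_factorial x)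
    (hasSum_dobinskiTerm_col x)
  have hvalue : 2 * exp (exp x + 2 * x - 1) = 2 / exp 1 * exp (exp x + 2 * x) := by
    rw [exp_sub]
    ring
  rw [hvalue, stirling2_eq_stirlingSecond]
  refine (hcols.mul_left (2 / exp 1)).congr_fun fun n => ?_
  rw [sum_Icc_one_eq_sum_range (by simp)]
  push_cast
  field_simp
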